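/- Let d ≥ 2 and let T^com be the complete infinite d-ary rooted tree. If G is a finite index subgroup of Aut(T^com), then the Minkowski dimension dim(G) exists and dim(G) = 1. -/

import Mathlib

open scoped Classical

noncomputable section

/-! ### Minkowski dimension machinery for groups of automorphisms of rooted trees

A rooted tree is presented by its levels `V 0, V 1, V 2, …` (with `V 0` the root level)
together with parent maps `V (n+1) → V n`.  An automorphism is a family of permutations
of the levels commuting with the parent maps; it is in particular determined by a point of
`∀ k, Equiv.Perm (V k)`.  The restriction `r_n σ` of `σ` to the height-`n` subtree is the
tuple `(σ 0, …, σ n)`, and the natural metric is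
`d(σ,τ) = inf { d!^{-(dⁿ-1)/(d-1)} : r_n σ = r_n τ }`. -/

/-- The exponent `(dⁿ - 1)/(d - 1) = 1 + d + ⋯ + d^(n-1)`. -/
def scaleExp (d n : ℕ) : ℕ := ∑ i ∈ Finset.range n, d ^ i

/-- The scale `ε_n = d!^{-(dⁿ-1)/(d-1)}`, i.e. `1/|Aut(Tₙᶜᵒᵐ)|`. -/
def treeScale (d n : ℕ) : ℝ := ((d.factorial : ℝ) ^ scaleExp d n)⁻¹

/-- Two families of level permutations restrict to the same automorphism of the
height-`n` subtree. -/
def AgreeUpTo {V : ℕ → Type*} (n : ℕ) (σ τ : ∀ k, Equiv.Perm (V k)) : Prop :=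
  ∀ k, k ≤ n → σ k = τ k

/-- The natural metric on automorphisms of a rooted `d`-ary tree:
`d(σ,τ) = inf { d!^{-(dⁿ-1)/(d-1)} : σ and τ agree on the height-n subtree }`. -/
def treeDist {V : ℕ → Type*} (d : ℕ) (σ τ : ∀ k, Equiv.Perm (V k)) : ℝ :=
  sInf {x : ℝ | ∃ n : ℕ, AgreeUpTo n σ τ ∧ x = treeScale d n}

/-- `N_{ε_n}(G)`: the least number of balls of radius `ε_n = treeScale d n` needed to
cover `G`. -/
def coverNum {V : ℕ → Type*} (d : ℕ) (G : Set (∀ k, Equiv.Perm (V k))) (n : ℕ) : ℕ :=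
  sInf {m : ℕ | ∃ s : Finset (∀ k, Equiv.Perm (V k)), s.card = m ∧
    G ⊆ ⋃ σ ∈ s, {τ | treeDist d σ τ ≤ treeScale d n}}

/-- The lower Minkowski dimension `liminf_{ε → 0} log N_ε(G) / log (1/ε)` (computed
along the scales `ε_n` of the metric). -/
def dimLower {V : ℕ → Type*} (d : ℕ) (G : Set (∀ k, Equiv.Perm (V k))) : ℝ :=
  Filter.liminf
    (fun n : ℕ => Real.log (coverNum d G n : ℝ) / Real.log (1 / treeScale d n)) Filter.atTop

/-- The upper Minkowski dimension `limsup_{ε → 0} log N_ε(G) / log (1/ε)` (computed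
along the scales `ε_n` of the metric). -/
def dimUpper {V : ℕ → Type*} (d : ℕ) (G : Set (∀ k, Equiv.Perm (V k))) : ℝ :=
  Filter.limsup
    (fun n : ℕ => Real.log (coverNum d G n : ℝ) / Real.log (1 / treeScale d n)) Filter.atTop

/-- The Minkowski dimension of `G` exists and equals `x`. -/
def HasDim {V : ℕ → Type*} (d : ℕ) (G : Set (∀ k, Equiv.Perm (V k))) (x : ℝ) : Prop :=
  dimLower d G = x ∧ dimUpper d G = x

/-- `G` is closed for the natural metric. -/
def IsDistClosed {V : ℕ → Type*} (d : ℕ) (G : Set (∀ k, Equiv.Perm (V k))) : Prop :=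
  ∀ σ, (∀ ε : ℝ, 0 < ε → ∃ τ ∈ G, treeDist d σ τ ≤ ε) → σ ∈ G

/-- The closure of `G` for the natural metric. -/
def distClosure {V : ℕ → Type*} (d : ℕ) (G : Set (∀ k, Equiv.Perm (V k))) :
    Set (∀ k, Equiv.Perm (V k)) :=
  {σ | ∀ ε : ℝ, 0 < ε → ∃ τ ∈ G, treeDist d σ τ ≤ ε}

/-- `|r_n(G)|`: the cardinality of the restriction of `G` to the height-`n` subtree. -/
def levelCard {V : ℕ → Type*} (G : Set (∀ k, Equiv.Perm (V k))) (n : ℕ) : ℕ :=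
  Nat.card ((fun (σ : ∀ k, Equiv.Perm (V k)) (k : Fin (n + 1)) => σ k.1) '' G)

end
noncomputable section

/-- An infinite `d`-ary rooted tree, presented by its levels: `V n` is the set of
level-`n` vertices, `parent` maps a vertex to its parent, there is a unique root,
and every vertex has at least `1` and at most `d` children. -/
structure DaryTree (d : ℕ) where
  V : ℕ → Type
  parent : ∀ n, V (n + 1) → V n
  root_card : Nat.card (V 0) = 1
  child_lb : ∀ n (v : V n), 1 ≤ Nat.card {w : V (n + 1) // parent n w = v}
  child_ub : ∀ n (v : V n), Nat.card {w : V (n + 1) // parent n w = v} ≤ d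

/-- The group of automorphisms of a rooted tree presented by levels and parent maps:
families of level permutations fixing the root level structure and commuting with
the parent maps. -/
def autGroup {V : ℕ → Type*} (parent : ∀ n, V (n + 1) → V n) :
    Subgroup (∀ n, Equiv.Perm (V n)) where
  carrier := {σ | ∀ n (v : V (n + 1)), parent n (σ (n + 1) v) = σ n (parent n v)}
  one_mem' := by intro n v; rfl
  mul_mem' := by
    intro a b ha hb n v
    simp only [Pi.mul_apply, Equiv.Perm.mul_apply]
    rw [ha, hb]
  inv_mem' := by
    intro a ha n v
    simp only [Pi.inv_apply]
    have h := ha n ((a (n + 1))⁻¹ v)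
    rw [show (a (n + 1)) ((a (n + 1))⁻¹ v) = v from (a (n + 1)).apply_symm_apply v] at h
    rw [h]; exact ((a n).symm_apply_apply _).symm

/-- The automorphism group `Aut(T)` of an infinite `d`-ary rooted tree. -/
def DaryTree.aut {d : ℕ} (T : DaryTree d) : Subgroup (∀ n, Equiv.Perm (T.V n)) :=
  autGroup T.parent

/-- A `d`-ary rooted tree is complete if every vertex has exactly `d` children. -/
def DaryTree.IsComplete {d : ℕ} (T : DaryTree d) : Prop :=
  ∀ n (v : T.V n), Nat.card {w : T.V (n + 1) // T.parent n w = v} = d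

end

/-! Restricting `Aut(T)` to the levels `0, …, n` gives a group of order exactly
`d!^(1 + d + ⋯ + d^(n-1)) = 1/ε_n`: since permutations of a level lift to the next one, the
automorphisms trivial up to level `n` realise at level `n + 1` every permutation commuting with
the parent map, and there are `d!^(dⁿ)` of those. A closed `ε_n`-ball is a fibre of this
restriction, so `N_{ε_n}(G) = |r_n(G)|`, which lies between `|r_n(Aut T)| / [Aut T : G]` and
`|r_n(Aut T)|`. Hence `log N_{ε_n}(G) / log (1/ε_n) → 1`. -/

open Filter Topology

lemma tendsto_log_div_log_of_le_of_le {x y : ℕ → ℝ} {M : ℝ} (hM : 0 < M)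
    (hx : Tendsto x atTop atTop) (hyx : ∀ n, y n ≤ x n) (hxy : ∀ n, x n ≤ M * y n) :
    Tendsto (fun n => Real.log (y n) / Real.log (x n)) atTop (𝓝 1) := by
  have hlog : Tendsto (fun n => Real.log (x n)) atTop atTop := Real.tendsto_log_atTop.comp hx
  have hlower : Tendsto (fun n => 1 - Real.log M / Real.log (x n)) atTop (𝓝 1) := by
    simpa using (tendsto_const_nhds.div_atTop hlog).const_sub (1 : ℝ)
  have hpos : ∀ᶠ n in atTop, 0 < Real.log (x n) ∧ 0 < y n := by
    filter_upwards [hx.eventually_gt_atTop 1] with n hn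
    have hxpos : 0 < x n := zero_lt_one.trans hn
    exact ⟨Real.log_pos hn, pos_of_mul_pos_right (hxpos.trans_le (hxy n)) hM.le⟩
  refine tendsto_of_tendsto_of_tendsto_of_le_of_le' hlower tendsto_const_nhds ?_ ?_ <;>
    filter_upwards [hpos] with n ⟨hlogx, hy⟩
  · have : Real.log (x n) ≤ Real.log M + Real.log (y n) := by
      rw [← Real.log_mul hM.ne' hy.ne']
      exact Real.log_le_log (hy.trans_le (hyx n)) (hxy n)
    rw [one_sub_div hlogx.ne']
    exact div_le_div_of_nonneg_right (by linarith) hlogx.le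
  · exact (div_le_one hlogx).mpr (Real.log_le_log hy (hyx n))

section LevelRestriction

variable {V : ℕ → Type*}

def levelRestrict (n : ℕ) : (∀ k, Equiv.Perm (V k)) →* ∀ k : Fin (n + 1), Equiv.Perm (V k) where
  toFun σ k := σ k
  map_one' := rfl
  map_mul' _ _ := rfl

lemma levelCard_eq_card_map (G : Subgroup (∀ k, Equiv.Perm (V k))) (n : ℕ) :
    levelCard (G : Set (∀ k, Equiv.Perm (V k))) n = Nat.card (G.map (levelRestrict n)) :=
  rfl

lemma agreeUpTo_iff_levelRestrict_eq {n : ℕ} {σ τ : ∀ k, Equiv.Perm (V k)} :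
    AgreeUpTo n σ τ ↔ levelRestrict n σ = levelRestrict n τ :=
  ⟨fun h => funext fun k => h k (Nat.lt_succ_iff.mp k.2),
    fun h k hk => congrFun h ⟨k, Nat.lt_succ_of_le hk⟩⟩

lemma mem_ker_levelRestrict {n : ℕ} {σ : ∀ k, Equiv.Perm (V k)} :
    σ ∈ (levelRestrict n).ker ↔ ∀ k ≤ n, σ k = 1 :=
  MonoidHom.mem_ker.trans (agreeUpTo_iff_levelRestrict_eq (τ := 1)).symm

end LevelRestriction

section TreeMetric

variable {d : ℕ} {V : ℕ → Type*}

lemma treeScale_pos (n : ℕ) : 0 < treeScale d n := by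
  unfold treeScale
  have := d.factorial_pos
  positivity

lemma one_div_treeScale (n : ℕ) : 1 / treeScale d n = (d.factorial : ℝ) ^ scaleExp d n := by
  rw [treeScale, one_div, inv_inv]

lemma le_scaleExp (hd : 1 ≤ d) (n : ℕ) : n ≤ scaleExp d n :=
  calc n = ∑ _i ∈ Finset.range n, 1 := by simp
  _ ≤ scaleExp d n := Finset.sum_le_sum fun i _ => Nat.one_le_pow i d hd

lemma scaleExp_succ (n : ℕ) : scaleExp d (n + 1) = scaleExp d n + d ^ n :=
  Finset.sum_range_succ _ n

lemma treeScale_strictAnti (hd : 2 ≤ d) : StrictAnti (treeScale d) := by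
  refine strictAnti_nat_of_succ_lt fun n => inv_strictAnti₀ (by positivity) ?_
  rw [scaleExp_succ]
  exact pow_lt_pow_right₀ (by exact_mod_cast Nat.one_lt_factorial.mpr hd)
    (Nat.lt_add_of_pos_right (by positivity))

lemma tendsto_one_div_treeScale (hd : 2 ≤ d) :
    Tendsto (fun n => 1 / treeScale d n) atTop atTop := by
  simp only [one_div_treeScale]
  exact (tendsto_pow_atTop_atTop_of_one_lt (by exact_mod_cast Nat.one_lt_factorial.mpr hd)).comp
    (tendsto_atTop_mono (le_scaleExp (by omega)) tendsto_id)

lemma agreeUpTo_zero [Subsingleton (Equiv.Perm (V 0))] (σ τ : ∀ k, Equiv.Perm (V k)) :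
    AgreeUpTo 0 σ τ := by
  intro k hk
  obtain rfl := Nat.le_zero.mp hk
  exact Subsingleton.elim _ _

lemma treeDist_le_treeScale_iff (hd : 2 ≤ d) [Subsingleton (Equiv.Perm (V 0))]
    {σ τ : ∀ k, Equiv.Perm (V k)} {n : ℕ} :
    treeDist d σ τ ≤ treeScale d n ↔ AgreeUpTo n σ τ := by
  refine ⟨fun h => ?_, fun h => csInf_le ⟨0, ?_⟩ ⟨n, h, rfl⟩⟩
  · by_contra hn
    cases n with
    | zero => exact hn (agreeUpTo_zero σ τ)
    | succ n =>
      have hlb : treeScale d n ≤ treeDist d σ τ := by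
        refine le_csInf ⟨_, 0, agreeUpTo_zero σ τ, rfl⟩ ?_
        rintro x ⟨m, hm, rfl⟩
        refine (treeScale_strictAnti hd).antitone (not_lt.mp fun hnm => hn fun k hk => ?_)
        exact hm k (by omega)
      exact absurd (hlb.trans h) (not_le.mpr (treeScale_strictAnti hd n.lt_succ_self))
  · rintro x ⟨m, -, rfl⟩
    exact (treeScale_pos m).le

lemma coverNum_eq_levelCard (hd : 2 ≤ d) [∀ k, Finite (V k)] [Subsingleton (Equiv.Perm (V 0))]
    (G : Set (∀ k, Equiv.Perm (V k))) (n : ℕ) : coverNum d G n = levelCard G n := by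
  set r := levelRestrict (V := V) n
  have hball : ∀ σ τ, treeDist d σ τ ≤ treeScale d n ↔ r σ = r τ := fun σ τ =>
    (treeDist_le_treeScale_iff hd).trans agreeUpTo_iff_levelRestrict_eq
  obtain ⟨s, -, hs⟩ := Set.exists_subset_bijOn G r
  have hsfin : s.Finite := Set.Finite.of_finite_image (hs.image_eq ▸ Set.toFinite _) hs.injOn
  have hcard : hsfin.toFinset.card = levelCard G n := by
    rw [← Set.ncard_eq_toFinset_card s hsfin, ← hs.injOn.ncard_image,
      hs.image_eq, ← Nat.card_coe_set_eq]
    rfl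
  have hcover : G ⊆ ⋃ σ ∈ hsfin.toFinset, {τ | treeDist d σ τ ≤ treeScale d n} := by
    intro τ hτ
    obtain ⟨σ, hσ, hστ⟩ := hs.surjOn ⟨τ, hτ, rfl⟩
    exact Set.mem_biUnion (hsfin.mem_toFinset.mpr hσ) ((hball σ τ).mpr hστ)
  refine le_antisymm (Nat.sInf_le ⟨_, hcard, hcover⟩) (le_csInf ⟨_, _, hcard, hcover⟩ ?_)
  rintro m ⟨t, rfl, ht⟩
  have himage : r '' G ⊆ r '' t := by
    rintro _ ⟨τ, hτ, rfl⟩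
    obtain ⟨σ, hσt, hστ⟩ := Set.mem_iUnion₂.mp (ht hτ)
    exact ⟨σ, hσt, (hball σ τ).mp hστ⟩
  calc levelCard G n = (r '' G).ncard := Nat.card_coe_set_eq _
  _ ≤ (r '' t).ncard := Set.ncard_le_ncard himage (t.finite_toSet.image r)
  _ ≤ t.card := (Set.ncard_image_le t.finite_toSet).trans (Set.ncard_coe_finset t).le

lemma hasDim_of_tendsto {G : Set (∀ k, Equiv.Perm (V k))} {x : ℝ}
    (h : Tendsto (fun n => Real.log (coverNum d G n) / Real.log (1 / treeScale d n))
      atTop (𝓝 x)) :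
    HasDim d G x :=
  ⟨h.liminf_eq, h.limsup_eq⟩

end TreeMetric

lemma Subgroup.card_map_le_relIndex_mul {Γ Δ : Type*} [Group Γ] [Group Δ] (f : Γ →* Δ)
    {H K : Subgroup Γ} (hHK : H ≤ K) (hH : H.relIndex K ≠ 0) :
    Nat.card (K.map f) ≤ H.relIndex K * Nat.card (H.map f) := by
  have hcard : Nat.card (H.map f) * (H.map f).relIndex (K.map f) = Nat.card (K.map f) := by
    simpa only [Subgroup.relIndex_bot_left] using
      Subgroup.relIndex_mul_relIndex ⊥ _ _ bot_le (Subgroup.map_mono (f := f) hHK)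
  rw [← hcard, mul_comm]
  gcongr
  rw [← Subgroup.relIndex_comap]
  exact Subgroup.relIndex_le_of_le_left (Subgroup.le_comap_map f H) hH

namespace DaryTree

variable {d : ℕ} (T : DaryTree d)

instance finite_V : ∀ n, Finite (T.V n)
  | 0 => Nat.finite_of_card_ne_zero (by rw [T.root_card]; exact one_ne_zero)
  | n + 1 =>
    have := finite_V n
    have (v : T.V n) : Finite {w // T.parent n w = v} :=
      Nat.finite_of_card_ne_zero (Nat.one_le_iff_ne_zero.mp (T.child_lb n v))
    Finite.of_equiv _ (Equiv.sigmaFiberEquiv (T.parent n))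

instance : Subsingleton (Equiv.Perm (T.V 0)) :=
  have := (Nat.card_eq_one_iff_unique.mp T.root_card).1
  inferInstance

variable {T}

lemma card_V (hT : T.IsComplete) : ∀ n, Nat.card (T.V n) = d ^ n
  | 0 => by rw [T.root_card, pow_zero]
  | n + 1 => by
    have := Fintype.ofFinite (T.V n)
    rw [← Nat.card_congr (Equiv.sigmaFiberEquiv (T.parent n)), Nat.card_sigma,
      Finset.sum_congr rfl fun v _ => hT n v, Finset.sum_const, Finset.card_univ,
      ← Nat.card_eq_fintype_card, card_V hT n, smul_eq_mul, pow_succ]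

lemma exists_lift (hT : T.IsComplete) (k : ℕ) (π : Equiv.Perm (T.V k)) :
    ∃ ρ : Equiv.Perm (T.V (k + 1)), ∀ w, T.parent k (ρ w) = π (T.parent k w) := by
  have e (c : T.V k) : {w // T.parent k w = π.symm c} ≃ {w // T.parent k w = c} :=
    (Finite.card_eq.mp (by rw [hT, hT])).some
  let E (c : T.V k) : {w // π (T.parent k w) = c} ≃ {w // T.parent k w = c} :=
    (Equiv.subtypeEquivRight fun _ => π.eq_symm_apply.symm).trans (e c)
  exact ⟨Equiv.ofFiberEquiv E, Equiv.ofFiberEquiv_map E⟩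

lemma exists_mem_aut_agreeUpTo (hT : T.IsComplete) (n : ℕ) (f : ∀ k, Equiv.Perm (T.V k))
    (hf : ∀ k < n, ∀ v, T.parent k (f (k + 1) v) = f k (T.parent k v)) :
    ∃ g ∈ T.aut, AgreeUpTo n g f := by
  choose L hL using T.exists_lift hT
  let g (k : ℕ) : Equiv.Perm (T.V k) :=
    Nat.rec (f 0) (fun k gk => if k + 1 ≤ n then f (k + 1) else L k gk) k
  have hg : AgreeUpTo n g f := by
    rintro (_ | k) hk
    · rfl
    · exact if_pos hk
  refine ⟨g, fun k v => ?_, hg⟩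
  by_cases hk : k + 1 ≤ n
  · rw [hg _ hk, hg k (by omega)]
    exact hf k hk v
  · change T.parent k ((if k + 1 ≤ n then f (k + 1) else L k (g k)) v) = g k (T.parent k v)
    rw [if_neg hk]
    exact hL k (g k) v

lemma coe_map_eval_ker_levelRestrict_inf_aut (hT : T.IsComplete) (n : ℕ) :
    (((levelRestrict n).ker ⊓ T.aut).map (Pi.evalMonoidHom (fun k => Equiv.Perm (T.V k)) (n + 1)) :
      Set (Equiv.Perm (T.V (n + 1)))) = {ρ : Equiv.Perm _ | T.parent n ∘ ρ = T.parent n} := by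
  ext ρ
  constructor
  · rintro ⟨g, ⟨hgker, hgaut⟩, rfl⟩
    funext w
    exact (hgaut n w).trans (by rw [mem_ker_levelRestrict.mp hgker n le_rfl]; rfl)
  · intro hρ
    obtain ⟨g, hg, hgf⟩ := T.exists_mem_aut_agreeUpTo hT (n + 1) (Function.update 1 (n + 1) ρ)
      (by
        intro k hk v
        rcases Nat.lt_succ_iff_lt_or_eq.mp hk with hk | rfl
        · rw [Function.update_of_ne (by omega), Function.update_of_ne (by omega)]
          rfl
        · rw [Function.update_self, Function.update_of_ne (by omega)]
          exact congrFun hρ v)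
    refine ⟨g, ⟨mem_ker_levelRestrict.mpr fun k hk => ?_, hg⟩, ?_⟩
    · rw [hgf k (by omega), Function.update_of_ne (by omega)]
      rfl
    · exact (hgf (n + 1) le_rfl).trans (Function.update_self _ _ _)

lemma card_map_eval_ker_levelRestrict_inf_aut (hT : T.IsComplete) (n : ℕ) :
    Nat.card (((levelRestrict n).ker ⊓ T.aut).map
      (Pi.evalMonoidHom (fun k => Equiv.Perm (T.V k)) (n + 1))) = d.factorial ^ d ^ n := by
  have := Fintype.ofFinite (T.V n)
  have hfib (v : T.V n) : {w | T.parent n w = v}.ncard = d :=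
    (Nat.card_coe_set_eq _).symm.trans (hT n v)
  rw [← SetLike.coe_sort_coe, coe_map_eval_ker_levelRestrict_inf_aut hT, Nat.card_coe_set_eq,
    DomMulAct.stabilizer_ncard]
  simp only [hfib, Finset.prod_const, Finset.card_univ, ← Nat.card_eq_fintype_card, T.card_V hT]

lemma relIndex_ker_levelRestrict_succ (hT : T.IsComplete) (n : ℕ) :
    (levelRestrict (n + 1)).ker.relIndex T.aut =
      d.factorial ^ d ^ n * (levelRestrict n).ker.relIndex T.aut := by
  set e := Pi.evalMonoidHom (fun k => Equiv.Perm (T.V k)) (n + 1)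
  have hle : (levelRestrict (n + 1)).ker ≤ (levelRestrict (V := T.V) n).ker := fun σ hσ =>
    mem_ker_levelRestrict.mpr fun k hk => mem_ker_levelRestrict.mp hσ k (by omega)
  have hker :
      (levelRestrict (n + 1)).ker ⊓ (levelRestrict n).ker = e.ker ⊓ (levelRestrict n).ker := by
    ext σ
    simp only [Subgroup.mem_inf, mem_ker_levelRestrict]
    simp only [MonoidHom.mem_ker, e, Pi.evalMonoidHom_apply]
    exact ⟨fun h => ⟨h.1 _ le_rfl, h.2⟩, fun h => ⟨fun k hk =>
      (Nat.le_succ_iff.mp hk).elim (h.2 k) (fun hk => hk ▸ h.1), h.2⟩⟩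
  conv_lhs => rw [← inf_eq_left.mpr hle]
  rw [← Subgroup.relIndex_inf_mul_relIndex, ← Subgroup.inf_relIndex_right, ← inf_assoc, hker,
    inf_assoc, Subgroup.inf_relIndex_right, Subgroup.relIndex_ker,
    card_map_eval_ker_levelRestrict_inf_aut hT]

lemma card_map_aut_levelRestrict (hT : T.IsComplete) (n : ℕ) :
    Nat.card (T.aut.map (levelRestrict n)) = d.factorial ^ scaleExp d n := by
  rw [← Subgroup.relIndex_ker]
  induction n with
  | zero =>
    have : (levelRestrict (V := T.V) 0).ker = ⊤ :=
      eq_top_iff.mpr fun σ _ => mem_ker_levelRestrict.mpr (agreeUpTo_zero σ 1)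
    rw [this, Subgroup.relIndex_top_left, scaleExp, Finset.sum_range_zero, pow_zero]
  | succ n ih => rw [relIndex_ker_levelRestrict_succ hT, ih, scaleExp_succ, pow_add, mul_comm]

end DaryTree

/-- **Finite-index subgroups of the automorphism group of the complete infinite
`d`-ary rooted tree have Minkowski dimension `1`.** -/
theorem arboreal_finite_index_large {d : ℕ} (hd : 2 ≤ d) (T : DaryTree d)
    (hT : T.IsComplete) (G : Subgroup (∀ n, Equiv.Perm (T.V n))) (hGsub : G ≤ T.aut)
    (hGfin : G.relIndex T.aut ≠ 0) :
    HasDim d (G : Set (∀ n, Equiv.Perm (T.V n))) 1 := by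
  have hcover (n : ℕ) : (coverNum d (G : Set (∀ n, Equiv.Perm (T.V n))) n : ℝ) =
      Nat.card (G.map (levelRestrict n)) := by
    rw [coverNum_eq_levelCard hd, levelCard_eq_card_map]
  have haut (n : ℕ) : 1 / treeScale d n = Nat.card (T.aut.map (levelRestrict n)) := by
    rw [one_div_treeScale, T.card_map_aut_levelRestrict hT, Nat.cast_pow]
  refine hasDim_of_tendsto (tendsto_log_div_log_of_le_of_le (M := G.relIndex T.aut)
    (by exact_mod_cast Nat.pos_of_ne_zero hGfin) (tendsto_one_div_treeScale hd)
    (fun n => ?_) (fun n => ?_))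
  · rw [hcover, haut]
    exact_mod_cast Subgroup.card_le_of_le (Subgroup.map_mono hGsub)
  · rw [hcover, haut]
    exact_mod_cast Subgroup.card_map_le_relIndex_mul _ hGsub hGfin
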